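/- Let γ : ℝ → ℝ be continuously differentiable, let v : ℝ → ℝ² and θ : ℝ → ℝ be differentiable, and assume v(t) = ‖v(t)‖·(cos θ(t), sin θ(t)) with ‖v(t)‖ > 0 for all t. Then for all t, (d/dt)[ γ(θ(t))·‖v(t)‖ ] = [ γ(θ(t))·(cos θ(t), sin θ(t)) + γ′(θ(t))·(−sin θ(t), cos θ(t)) ] · v′(t). -/

import Mathlib

/-!
Since `τ(θ)` is a unit vector, `‖v‖ = ⟪v, τ(θ)⟫`, which is differentiable with derivative
`⟪τ(θ), v'⟫` because `τ(θ)' = θ' n(θ) ⟂ v`. Differentiating `v = ‖v‖ τ(θ)` then gives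
`⟪n(θ), v'⟫ = θ' ‖v‖`, and the product and chain rules for `γ(θ) ‖v‖` finish the proof.
-/

open Real

/-- Unit tangent vector of inclination angle `θ`. -/
noncomputable def tauVec (θ : ℝ) : EuclideanSpace ℝ (Fin 2) := WithLp.toLp 2 ![cos θ, sin θ]

/-- Unit normal vector of inclination angle `θ`. -/
noncomputable def nVec (θ : ℝ) : EuclideanSpace ℝ (Fin 2) := WithLp.toLp 2 ![-sin θ, cos θ]

lemma inner_tauVec_self (a : ℝ) : inner ℝ (tauVec a) (tauVec a) = 1 := by
  simp only [tauVec, PiLp.inner_apply, Fin.sum_univ_two]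
  simp

lemma inner_nVec_self (a : ℝ) : inner ℝ (nVec a) (nVec a) = 1 := by
  simp only [nVec, PiLp.inner_apply, Fin.sum_univ_two]
  simp

lemma inner_nVec_tauVec (a : ℝ) : inner ℝ (nVec a) (tauVec a) = 0 := by
  simp only [tauVec, nVec, PiLp.inner_apply, Fin.sum_univ_two]
  simp
  ring

lemma tauVec_eq (a : ℝ) :
    tauVec a = cos a • EuclideanSpace.single 0 1 + sin a • EuclideanSpace.single 1 1 := by
  ext i; fin_cases i <;> simp [tauVec]

lemma nVec_eq (a : ℝ) :
    nVec a = -sin a • EuclideanSpace.single 0 1 + cos a • EuclideanSpace.single 1 1 := by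
  ext i; fin_cases i <;> simp [nVec]

lemma hasDerivAt_tauVec {θ : ℝ → ℝ} {θ' t : ℝ} (h : HasDerivAt θ θ' t) :
    HasDerivAt (fun s => tauVec (θ s)) (θ' • nVec (θ t)) t := by
  rw [funext fun s => tauVec_eq (θ s), nVec_eq]
  exact ((((hasDerivAt_cos (θ t)).comp t h).smul_const _).add
    (((hasDerivAt_sin (θ t)).comp t h).smul_const _)).congr_deriv (by module)

lemma hasDerivAt_smul_tauVec {r θ : ℝ → ℝ} {r' θ' t : ℝ} (hr : HasDerivAt r r' t)
    (hθ : HasDerivAt θ θ' t) :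
    HasDerivAt (fun s => r s • tauVec (θ s)) (r' • tauVec (θ t) + (r t * θ') • nVec (θ t)) t :=
  (hr.smul (hasDerivAt_tauVec hθ)).congr_deriv (by module)

section PolarForm

variable {v : ℝ → EuclideanSpace ℝ (Fin 2)} {θ : ℝ → ℝ} {v' : EuclideanSpace ℝ (Fin 2)}
  {θ' t : ℝ}

lemma hasDerivAt_norm_of_eq_smul_tauVec (hrep : ∀ s, v s = ‖v s‖ • tauVec (θ s))
    (hv : HasDerivAt v v' t) (hθ : HasDerivAt θ θ' t) :
    HasDerivAt (fun s => ‖v s‖) (inner ℝ (tauVec (θ t)) v') t := by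
  have hnorm : (fun s => ‖v s‖) = fun s => inner ℝ (v s) (tauVec (θ s)) := by
    funext s
    rw [hrep s, real_inner_smul_left, inner_tauVec_self, mul_one, ← hrep s]
  rw [hnorm]
  refine (hv.inner ℝ (hasDerivAt_tauVec hθ)).congr_deriv ?_
  rw [hrep t, real_inner_smul_left, real_inner_smul_right, real_inner_comm (nVec _),
    inner_nVec_tauVec, real_inner_comm]
  ring

lemma inner_nVec_of_eq_smul_tauVec (hrep : ∀ s, v s = ‖v s‖ • tauVec (θ s))
    (hv : HasDerivAt v v' t) (hθ : HasDerivAt θ θ' t) :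
    inner ℝ (nVec (θ t)) v' = θ' * ‖v t‖ := by
  have hpolar := hasDerivAt_smul_tauVec (hasDerivAt_norm_of_eq_smul_tauVec hrep hv hθ) hθ
  rw [← funext hrep] at hpolar
  rw [hv.unique hpolar, inner_add_right, real_inner_smul_right, real_inner_smul_right,
    inner_nVec_tauVec, inner_nVec_self]
  ring

end PolarForm

theorem anisotropic_density_first_variation_general
    (γ : ℝ → ℝ) (hγ : ContDiff ℝ 1 γ)
    (v : ℝ → EuclideanSpace ℝ (Fin 2)) (θ : ℝ → ℝ)
    (hv : Differentiable ℝ v) (hθ : Differentiable ℝ θ)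
    (hrep : ∀ t, v t = ‖v t‖ • tauVec (θ t)) :
    ∀ t : ℝ,
      deriv (fun t => γ (θ t) * ‖v t‖) t =
        (inner ℝ (γ (θ t) • tauVec (θ t) + deriv γ (θ t) • nVec (θ t))
          (deriv v t) : ℝ) := by
  intro t
  have hθt := (hθ t).hasDerivAt
  have hvt := (hv t).hasDerivAt
  have hγθ : HasDerivAt (fun s => γ (θ s)) (deriv γ (θ t) * deriv θ t) t :=
    ((hγ.differentiable one_ne_zero (θ t)).hasDerivAt).comp t hθt
  have hdensity : HasDerivAt (fun s => γ (θ s) * ‖v s‖) _ t :=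
    hγθ.mul (hasDerivAt_norm_of_eq_smul_tauVec hrep hvt hθt)
  rw [hdensity.deriv, inner_add_left, real_inner_smul_left, real_inner_smul_left,
    inner_nVec_of_eq_smul_tauVec hrep hvt hθt]
  ring

/-- First-variation identity for the anisotropic energy density: if
`v(t) = ‖v(t)‖·(cos θ(t), sin θ(t))` with `‖v(t)‖ > 0`, then
`(d/dt)[γ(θ)·‖v‖] = (γ(θ)·τ(θ) + γ′(θ)·n(θ)) · v′`. -/
theorem anisotropic_density_first_variation
    (γ : ℝ → ℝ) (hγ : ContDiff ℝ 1 γ)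
    (v : ℝ → EuclideanSpace ℝ (Fin 2)) (θ : ℝ → ℝ)
    (hv : Differentiable ℝ v) (hθ : Differentiable ℝ θ)
    (hrep : ∀ t, v t = ‖v t‖ • tauVec (θ t))
    (hpos : ∀ t, 0 < ‖v t‖) :
    ∀ t : ℝ,
      deriv (fun t => γ (θ t) * ‖v t‖) t =
        (inner ℝ (γ (θ t) • tauVec (θ t) + deriv γ (θ t) • nVec (θ t))
          (deriv v t) : ℝ) :=
  anisotropic_density_first_variation_general γ hγ v θ hv hθ hrep
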